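/- Let A be an irreducible N×N matrix over ℝ ∪ {−∞} whose graph G(A) contains at least one circuit, and let λ be the maximum average circuit weight of G(A). Then for every finite initial vector x(0) ∈ ℝ^N, the sequence defined by x(k+1) = A ⊗ x(k), where (A ⊗ x)_i = max_j (A_{ij} + x_j), satisfies lim_{k→∞} x_i(k)/k = λ for every node i; that is, the asymptotic growth rate of the update times of the all-inputs (max-plus) system equals the maximal average circuit weight. -/

import Mathlib

open scoped BigOperators

/-- `IsWalkMP A l v j i` : `v` is a walk of length `l` from node `j` to node `i` in the
weighted digraph `G(A)` of a max-plus matrix `A` over `ℝ ∪ {-∞}`, where there is an edge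
from `b` to `a` whenever `A a b ≠ -∞`. -/
def IsWalkMP {N : ℕ} (A : Matrix (Fin N) (Fin N) (WithBot ℝ)) (l : ℕ)
    (v : Fin (l + 1) → Fin N) (j i : Fin N) : Prop :=
  v 0 = j ∧ v (Fin.last l) = i ∧ ∀ t : Fin l, A (v t.succ) (v t.castSucc) ≠ ⊥

/-- The weight of a walk: the sum of the weights of its edges. -/
def walkWeightMP {N : ℕ} (A : Matrix (Fin N) (Fin N) (WithBot ℝ)) (l : ℕ)
    (v : Fin (l + 1) → Fin N) : WithBot ℝ :=
  ∑ t : Fin l, A (v t.succ) (v t.castSucc)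

/-!
Going around a circuit of average weight `lam` through a node `j` raises `x_j` by `m * lam`
every `m` steps, and irreducibility carries this gain along a fixed path to every node: this
gives `x_i(k) ≥ k * lam - D`. Conversely `x_i(k)` is an initial value plus the weight of a walk
of length `k`; a walk longer than `N` repeats a node, and cutting out the circuit in between
(average weight `≤ lam`) shows that every walk of length `l` weighs at most `l * lam + C`.
-/

open Finset Filter Topology

theorem WithBot.exists_forall_le_coe {ι α : Type*} [Finite ι] [LinearOrder α] [Nonempty α]
    (f : ι → WithBot α) : ∃ b : α, ∀ i, f i ≤ b := by
  obtain ⟨M, hM⟩ := Finite.bddAbove_range f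
  exact ⟨M.unbotD (Classical.arbitrary α), fun i =>
    (hM (Set.mem_range_self i)).trans (WithBot.le_coe_unbotD M _)⟩

theorem Fintype.exists_lt_le_card_eq {α : Type*} [Fintype α] (v : ℕ → α) :
    ∃ s t, s < t ∧ t ≤ Fintype.card α ∧ v s = v t := by
  obtain ⟨s, t, hst, heq⟩ :=
    Fintype.exists_ne_map_eq_of_card_lt (fun t : Fin (Fintype.card α + 1) => v t) (by simp)
  rcases lt_or_gt_of_ne (Fin.val_ne_of_ne hst) with h | h
  · exact ⟨s, t, h, Nat.lt_succ_iff.mp t.isLt, heq⟩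
  · exact ⟨t, s, h, Nat.lt_succ_iff.mp s.isLt, heq.symm⟩

theorem Fin.exists_comp_val_eq {α : Type*} {l : ℕ} (c : Fin (l + 1) → α) :
    ∃ v : ℕ → α, (fun t : Fin (l + 1) => v t) = c :=
  ⟨fun t => c ⟨min t l, by omega⟩,
    funext fun t => by simp [Nat.min_eq_left (Nat.lt_succ_iff.mp t.isLt)]⟩

theorem exists_forall_mul_sub_le_of_add_le {y : ℕ → ℝ} {m : ℕ} {lam : ℝ} (hm : 0 < m)
    (h : ∀ k, y k + m * lam ≤ y (k + m)) : ∃ D, ∀ k, k * lam - D ≤ y k := by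
  obtain ⟨D, hD⟩ := ((Finset.range m).image fun s => s * lam - y s).bddAbove
  refine ⟨D, fun k => ?_⟩
  induction k using Nat.strong_induction_on with
  | _ k ih =>
    rcases lt_or_ge k m with hk | hk
    · linarith [hD (Finset.mem_coe.mpr (Finset.mem_image_of_mem _ (Finset.mem_range.mpr hk)))]
    · obtain ⟨k, rfl⟩ := Nat.exists_eq_add_of_le' hk
      push_cast
      linarith [ih k (by omega), h k]

theorem tendsto_div_natCast_of_sub_bounded {r : ℕ → ℝ} {lam C D : ℝ}
    (hlo : ∀ᶠ k in atTop, k * lam - D ≤ r k) (hhi : ∀ᶠ k in atTop, r k ≤ k * lam + C) :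
    Tendsto (fun k => r k / k) atTop (𝓝 lam) := by
  have hlim (c : ℝ) : Tendsto (fun k : ℕ => lam + c / k) atTop (𝓝 lam) := by
    simpa using tendsto_const_nhds.add (tendsto_const_div_atTop_nhds_zero_nat c)
  refine tendsto_of_tendsto_of_tendsto_of_le_of_le' (hlim (-D)) (hlim C) ?_ ?_
  · filter_upwards [hlo, eventually_gt_atTop 0] with k hk hk0
    calc lam + -D / k = (k * lam - D) / k := by field_simp; ring
      _ ≤ r k / k := by gcongr
  · filter_upwards [hhi, eventually_gt_atTop 0] with k hk hk0
    calc r k / k ≤ (k * lam + C) / k := by gcongr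
      _ = lam + C / k := by field_simp

namespace MaxPlus

variable {N : ℕ} (A : Matrix (Fin N) (Fin N) (WithBot ℝ))

/-- This is `⊥` exactly when some step is not an edge of `G(A)`, so a walk is simply a sequence
of nodes of weight `≠ ⊥`. -/
def weight (v : ℕ → Fin N) (l : ℕ) : WithBot ℝ :=
  ∑ t ∈ range l, A (v (t + 1)) (v t)

theorem weight_succ (v : ℕ → Fin N) (l : ℕ) :
    weight A v (l + 1) = weight A v l + A (v (l + 1)) (v l) :=
  sum_range_succ _ _

theorem weight_add (v : ℕ → Fin N) (a b : ℕ) :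
    weight A v (a + b) = weight A v a + weight A (fun t => v (a + t)) b := by
  simp only [weight, sum_range_add, add_assoc]

theorem weight_congr {v w : ℕ → Fin N} {l : ℕ} (h : ∀ t ≤ l, v t = w t) :
    weight A v l = weight A w l :=
  sum_congr rfl fun t ht => by
    rw [mem_range] at ht
    rw [h t ht.le, h (t + 1) ht]

theorem weight_ne_bot_iff {v : ℕ → Fin N} {l : ℕ} :
    weight A v l ≠ ⊥ ↔ ∀ t < l, A (v (t + 1)) (v t) ≠ ⊥ := by
  simp [weight, WithBot.sum_eq_bot_iff]

theorem exists_ne_bot_of_weight_ne_bot {v : ℕ → Fin N} {l : ℕ} (hv : weight A v l ≠ ⊥)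
    (hl : 0 < l) : ∃ j, A (v l) j ≠ ⊥ := by
  obtain ⟨l, rfl⟩ := Nat.exists_eq_add_one_of_ne_zero hl.ne'
  exact ⟨v l, (weight_ne_bot_iff A).mp hv l (by omega)⟩

theorem exists_ne_bot_of_weight_ne_bot_of_circuit {j : Fin N} {c : ℕ → Fin N} {m : ℕ}
    (hm : 0 < m) (hcm : c m = j) (hc : weight A c m ≠ ⊥) {p : ℕ → Fin N} {l : ℕ} (hp0 : p 0 = j)
    (hp : weight A p l ≠ ⊥) : ∃ j', A (p l) j' ≠ ⊥ := by
  rcases l.eq_zero_or_pos with rfl | hl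
  · rw [hp0, ← hcm]
    exact exists_ne_bot_of_weight_ne_bot A hc hm
  · exact exists_ne_bot_of_weight_ne_bot A hp hl

theorem walkWeightMP_eq_weight (v : ℕ → Fin N) (l : ℕ) :
    walkWeightMP A l (fun t => v t) = weight A v l :=
  Fin.sum_univ_eq_sum_range (fun t => A (v (t + 1)) (v t)) l

theorem isWalkMP_iff {v : ℕ → Fin N} {l : ℕ} {j i : Fin N} :
    IsWalkMP A l (fun t => v t) j i ↔ v 0 = j ∧ v l = i ∧ weight A v l ≠ ⊥ := by
  simp [IsWalkMP, weight_ne_bot_iff, Fin.forall_iff]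

def AvgCircuitWeightLE (lam : ℝ) : Prop :=
  ∀ (v : ℕ → Fin N) (m : ℕ), 0 < m → v m = v 0 → weight A v m ≤ ((m * lam : ℝ) : WithBot ℝ)

theorem avgCircuitWeightLE_iff {lam : ℝ} :
    AvgCircuitWeightLE A lam ↔ ∀ (m : ℕ) (i : Fin N) (c : Fin (m + 1) → Fin N), 1 ≤ m →
      IsWalkMP A m c i i → walkWeightMP A m c ≤ (((m : ℝ) * lam : ℝ) : WithBot ℝ) := by
  refine ⟨fun h m i c hm hc => ?_, fun h v m hm hv => ?_⟩
  · obtain ⟨v, rfl⟩ := Fin.exists_comp_val_eq c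
    obtain ⟨rfl, hvm, -⟩ := (isWalkMP_iff A).mp hc
    rw [walkWeightMP_eq_weight]
    exact h v m hm hvm
  · by_cases hw : weight A v m = ⊥
    · simp [hw]
    · rw [← walkWeightMP_eq_weight]
      exact h m (v 0) _ hm ((isWalkMP_iff A).mpr ⟨rfl, hv, hw⟩)

def cutOut (v : ℕ → Fin N) (s d : ℕ) (t : ℕ) : Fin N :=
  if t ≤ s then v t else v (t + d)

theorem weight_eq_weight_cutOut_add {v : ℕ → Fin N} {s d : ℕ} (hv : v (s + d) = v s) (e : ℕ) :
    weight A v (s + d + e) =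
      weight A (cutOut v s d) (s + e) + weight A (fun t => v (s + t)) d := by
  have hhead : weight A (cutOut v s d) s = weight A v s :=
    weight_congr A fun t ht => if_pos ht
  have htail : (fun t => cutOut v s d (s + t)) = fun t => v (s + d + t) := by
    funext t
    rcases t.eq_zero_or_pos with rfl | ht
    · simp [cutOut, hv]
    · simp only [cutOut, if_neg (show ¬ s + t ≤ s by omega)]
      congr 1
      omega
  rw [weight_add, weight_add, weight_add, hhead, htail, add_right_comm]

variable {A} in
theorem exists_weight_le_of_avgCircuitWeightLE {lam : ℝ} (h : AvgCircuitWeightLE A lam) :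
    ∃ C : ℝ, ∀ v l, weight A v l ≤ ((l * lam + C : ℝ) : WithBot ℝ) := by
  obtain ⟨E, hE⟩ := WithBot.exists_forall_le_coe fun ab : Fin N × Fin N => A ab.1 ab.2
  refine ⟨N * |E - lam|, fun v l => ?_⟩
  induction l using Nat.strong_induction_on generalizing v with
  | _ l ih =>
    rcases le_or_gt l N with hl | hl
    · calc weight A v l ≤ ∑ _t ∈ range l, ((E : ℝ) : WithBot ℝ) :=
            sum_le_sum fun t _ => hE (v (t + 1), v t)
        _ ≤ ((l * lam + N * |E - lam| : ℝ) : WithBot ℝ) := by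
          rw [sum_const, card_range, ← WithBot.coe_nsmul, WithBot.coe_le_coe, nsmul_eq_mul]
          have : (l : ℝ) * (E - lam) ≤ N * |E - lam| :=
            (mul_le_mul_of_nonneg_left (le_abs_self _) (Nat.cast_nonneg l)).trans
              (mul_le_mul_of_nonneg_right (by exact_mod_cast hl) (abs_nonneg _))
          linarith
    · obtain ⟨s, t, hst, htN, hvst⟩ := Fintype.exists_lt_le_card_eq v
      rw [Fintype.card_fin] at htN
      obtain ⟨d, rfl⟩ := Nat.exists_eq_add_of_le hst.le
      obtain ⟨e, rfl⟩ := Nat.exists_eq_add_of_le (show s + d ≤ l by omega)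
      rw [weight_eq_weight_cutOut_add A hvst.symm]
      calc _ ≤ (((s + e : ℕ) * lam + N * |E - lam| : ℝ) : WithBot ℝ)
            + ((d * lam : ℝ) : WithBot ℝ) :=
          add_le_add (ih _ (by omega) _) (h _ _ (by omega) (by simpa using hvst.symm))
        _ = _ := by rw [← WithBot.coe_add]; congr 1; push_cast; ring

def IsTrajectory (x : ℕ → Fin N → WithBot ℝ) : Prop :=
  ∀ k i, x (k + 1) i = univ.sup fun j => A i j + x k j

namespace IsTrajectory

variable {A} {x : ℕ → Fin N → WithBot ℝ} (hx : IsTrajectory A x)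
include hx

theorem edge_add_le (k : ℕ) (i j : Fin N) : A i j + x k j ≤ x (k + 1) i :=
  (hx k i).symm ▸ le_sup (f := fun j => A i j + x k j) (mem_univ j)

theorem add_weight_le (v : ℕ → Fin N) (k l : ℕ) :
    x k (v 0) + weight A v l ≤ x (k + l) (v l) := by
  induction l with
  | zero => simp [weight]
  | succ l ih =>
    calc x k (v 0) + weight A v (l + 1)
        = A (v (l + 1)) (v l) + (x k (v 0) + weight A v l) := by rw [weight_succ]; ac_rfl
      _ ≤ A (v (l + 1)) (v l) + x (k + l) (v l) := by gcongr
      _ ≤ x (k + (l + 1)) (v (l + 1)) := hx.edge_add_le _ _ _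

theorem exists_le_add_weight (k : ℕ) (i : Fin N) :
    ∃ v : ℕ → Fin N, v k = i ∧ x k i ≤ x 0 (v 0) + weight A v k := by
  induction k generalizing i with
  | zero => exact ⟨fun _ => i, rfl, by simp [weight]⟩
  | succ k ih =>
    obtain ⟨j, -, hj⟩ := exists_mem_eq_sup univ ⟨i, mem_univ i⟩ fun j => A i j + x k j
    obtain ⟨v, hvk, hv⟩ := ih j
    refine ⟨fun t => if t ≤ k then v t else i, by simp, ?_⟩
    have hprefix : weight A (fun t => if t ≤ k then v t else i) k = weight A v k :=
      weight_congr A fun t ht => if_pos ht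
    rw [hx, hj, weight_succ, hprefix]
    simp only [le_refl, if_true, Nat.not_succ_le_self, if_false, hvk, zero_le]
    calc A i j + x k j ≤ A i j + (x 0 (v 0) + weight A v k) := by gcongr
      _ = _ := by ac_rfl

theorem ne_bot (hin : ∀ i, ∃ j, A i j ≠ ⊥) (h0 : ∀ i, x 0 i ≠ ⊥) (k : ℕ) (i : Fin N) :
    x k i ≠ ⊥ := by
  induction k generalizing i with
  | zero => exact h0 i
  | succ k ih =>
    obtain ⟨j, hj⟩ := hin i
    exact ne_bot_of_le_ne_bot (WithBot.add_ne_bot.mpr ⟨hj, ih j⟩) (hx.edge_add_le k i j)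

theorem exists_le_mul_add {lam : ℝ} (h : AvgCircuitWeightLE A lam) :
    ∃ C : ℝ, ∀ k i, x k i ≤ ((k * lam + C : ℝ) : WithBot ℝ) := by
  obtain ⟨C, hC⟩ := exists_weight_le_of_avgCircuitWeightLE h
  obtain ⟨X, hX⟩ := WithBot.exists_forall_le_coe (x 0)
  refine ⟨X + C, fun k i => ?_⟩
  obtain ⟨v, -, hv⟩ := hx.exists_le_add_weight k i
  calc x k i ≤ x 0 (v 0) + weight A v k := hv
    _ ≤ (X : WithBot ℝ) + ((k * lam + C : ℝ) : WithBot ℝ) := add_le_add (hX _) (hC v k)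
    _ = _ := by rw [← WithBot.coe_add]; congr 1; ring

theorem exists_mul_sub_le {lam : ℝ} {j i : Fin N} (hfin : ∀ k, x k j ≠ ⊥)
    {c : ℕ → Fin N} {m : ℕ} (hm : 0 < m) (hc0 : c 0 = j) (hcm : c m = j)
    (hcw : weight A c m = ((m * lam : ℝ) : WithBot ℝ))
    {p : ℕ → Fin N} {l : ℕ} (hp0 : p 0 = j) (hpl : p l = i) (hpw : weight A p l ≠ ⊥) :
    ∃ D : ℝ, ∀ k ≥ l, ((k * lam - D : ℝ) : WithBot ℝ) ≤ x k i := by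
  choose y hy using fun k => WithBot.ne_bot_iff_exists.mp (hfin k)
  obtain ⟨b, hb⟩ := WithBot.ne_bot_iff_exists.mp hpw
  have hcircuit (k : ℕ) : y k + m * lam ≤ y (k + m) := by
    have := hx.add_weight_le c k m
    rwa [hc0, hcm, ← hy, ← hy, hcw, ← WithBot.coe_add, WithBot.coe_le_coe] at this
  obtain ⟨D, hD⟩ := exists_forall_mul_sub_le_of_add_le hm hcircuit
  refine ⟨D - b + l * lam, fun k hk => ?_⟩
  obtain ⟨k, rfl⟩ := Nat.exists_eq_add_of_le' hk
  calc (((k + l : ℕ) * lam - (D - b + l * lam) : ℝ) : WithBot ℝ)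
      ≤ x k j + weight A p l := by
        rw [← hy, ← hb, ← WithBot.coe_add, WithBot.coe_le_coe]
        push_cast
        linarith [hD k]
    _ ≤ x (k + l) i := by simpa [hp0, hpl] using hx.add_weight_le p k l

end IsTrajectory

end MaxPlus

open MaxPlus

theorem maxplus_growth_rate_eq_max_avg_circuit_weight_general {N : ℕ}
    (A : Matrix (Fin N) (Fin N) (WithBot ℝ))
    (hirr : ∀ i j : Fin N, ∃ (l : ℕ) (p : Fin (l + 1) → Fin N), IsWalkMP A l p i j)
    (lam : ℝ)
    (hub : ∀ (m : ℕ) (i : Fin N) (c : Fin (m + 1) → Fin N), 1 ≤ m → IsWalkMP A m c i i →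
      walkWeightMP A m c ≤ (((m : ℝ) * lam : ℝ) : WithBot ℝ))
    (hmax : ∃ (m : ℕ) (i : Fin N) (c : Fin (m + 1) → Fin N), 1 ≤ m ∧ IsWalkMP A m c i i ∧
      walkWeightMP A m c = (((m : ℝ) * lam : ℝ) : WithBot ℝ))
    (x0 : Fin N → ℝ) (x : ℕ → Fin N → WithBot ℝ)
    (hx0 : ∀ i : Fin N, x 0 i = ((x0 i : ℝ) : WithBot ℝ))
    (hrec : ∀ (k : ℕ) (i : Fin N), x (k + 1) i = Finset.univ.sup fun j => A i j + x k j) :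
    ∀ i : Fin N, ∃ r : ℕ → ℝ, (∀ k : ℕ, x k i = ((r k : ℝ) : WithBot ℝ)) ∧
      Filter.Tendsto (fun k : ℕ => r k / (k : ℝ)) Filter.atTop (nhds lam) := by
  intro i
  have hx : IsTrajectory A x := hrec
  obtain ⟨m, j, c, hm, hc, hcw⟩ := hmax
  obtain ⟨c, rfl⟩ := Fin.exists_comp_val_eq c
  obtain ⟨hc0, hcm, hcne⟩ := (isWalkMP_iff A).mp hc
  rw [walkWeightMP_eq_weight] at hcw
  have hreach (i' : Fin N) : ∃ (p : ℕ → Fin N) (l : ℕ), p 0 = j ∧ p l = i' ∧ weight A p l ≠ ⊥ := by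
    obtain ⟨l, p, hp⟩ := hirr j i'
    obtain ⟨p, rfl⟩ := Fin.exists_comp_val_eq p
    exact ⟨p, l, (isWalkMP_iff A).mp hp⟩
  have hin (i' : Fin N) : ∃ j', A i' j' ≠ ⊥ := by
    obtain ⟨p, l, hp0, rfl, hp⟩ := hreach i'
    exact exists_ne_bot_of_weight_ne_bot_of_circuit A hm hcm hcne hp0 hp
  have hfin := hx.ne_bot hin fun i' => hx0 i' ▸ WithBot.coe_ne_bot
  choose r hr using fun k => WithBot.ne_bot_iff_exists.mp (hfin k i)
  obtain ⟨C, hC⟩ := hx.exists_le_mul_add ((avgCircuitWeightLE_iff A).mpr hub)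
  obtain ⟨p, l, hp0, hpl, hp⟩ := hreach i
  obtain ⟨D, hD⟩ := hx.exists_mul_sub_le (hfin · j) hm hc0 hcm hcw hp0 hpl hp
  refine ⟨r, fun k => (hr k).symm, tendsto_div_natCast_of_sub_bounded (C := C) (D := D) ?_ ?_⟩
  · filter_upwards [eventually_ge_atTop l] with k hk
    exact WithBot.coe_le_coe.mp ((hr k).symm ▸ hD k hk)
  · exact Eventually.of_forall fun k => WithBot.coe_le_coe.mp ((hr k).symm ▸ hC k i)

/-- for an irreducible max-plus matrix `A` over `ℝ ∪ {-∞}` whose graph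
contains at least one circuit, with maximum average circuit weight `lam`, the all-inputs
system `x(k+1) = A ⊗ x(k)`, `(A ⊗ x)_i = max_j (A i j + x j)`, started from any finite
vector, has asymptotic growth rate `lam` at every node: `x_i(k)/k → lam`. -/
theorem maxplus_growth_rate_eq_max_avg_circuit_weight {N : ℕ}
    (A : Matrix (Fin N) (Fin N) (WithBot ℝ))
    (hirr : ∀ i j : Fin N, ∃ (l : ℕ) (p : Fin (l + 1) → Fin N), IsWalkMP A l p i j)
    (hcirc : ∃ (m : ℕ) (i : Fin N) (c : Fin (m + 1) → Fin N), 1 ≤ m ∧ IsWalkMP A m c i i)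
    (lam : ℝ)
    (hub : ∀ (m : ℕ) (i : Fin N) (c : Fin (m + 1) → Fin N), 1 ≤ m → IsWalkMP A m c i i →
      walkWeightMP A m c ≤ (((m : ℝ) * lam : ℝ) : WithBot ℝ))
    (hmax : ∃ (m : ℕ) (i : Fin N) (c : Fin (m + 1) → Fin N), 1 ≤ m ∧ IsWalkMP A m c i i ∧
      walkWeightMP A m c = (((m : ℝ) * lam : ℝ) : WithBot ℝ))
    (x0 : Fin N → ℝ) (x : ℕ → Fin N → WithBot ℝ)
    (hx0 : ∀ i : Fin N, x 0 i = ((x0 i : ℝ) : WithBot ℝ))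
    (hrec : ∀ (k : ℕ) (i : Fin N), x (k + 1) i = Finset.univ.sup fun j => A i j + x k j) :
    ∀ i : Fin N, ∃ r : ℕ → ℝ, (∀ k : ℕ, x k i = ((r k : ℝ) : WithBot ℝ)) ∧
      Filter.Tendsto (fun k : ℕ => r k / (k : ℝ)) Filter.atTop (nhds lam) :=
  maxplus_growth_rate_eq_max_avg_circuit_weight_general A hirr lam hub hmax x0 x hx0 hrec
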